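/- arXiv:2304.08468 — 2 statements merged into one kernel-verified Lean document; each statement's English description precedes it below -/
import Mathlib

section
/- Let n₁, n₂, n₃ ≥ 2 be integers with n₁·n₂·n₃ even, and let R = {1,…,n₁}×{1,…,n₂}×{1,…,n₃} ⊂ ℤ³. Let τ be a perfect matching of the subgraph of the grid graph induced on R. Then τ admits a flip or a trit: either there exist two edges of τ that form two opposite sides of some unit lattice square, or there exist three pairwise non-parallel edges of τ that are all contained in a single unit lattice cube (a translate of {0,1}³). -/
open MeasureTheory Filter

namespace Dimers

/-- Vertices of the grid graph on `ℤ³`. -/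
abbrev V : Type := Fin 3 → ℤ

/-- The `i`-th standard unit vector of `ℤ³`. -/
def unitVec (i : Fin 3) : V := fun j => if j = i then 1 else 0

/-- Grid adjacency: two vertices are adjacent iff they differ by a standard unit vector. -/
def Adj (x y : V) : Prop := ∃ i : Fin 3, y = x + unitVec i ∨ x = y + unitVec i

/-- A vertex is even if its coordinate sum is even. -/
def IsEven (x : V) : Prop := (x 0 + x 1 + x 2) % 2 = 0

instance : DecidablePred IsEven := fun x =>
  inferInstanceAs (Decidable ((x 0 + x 1 + x 2) % 2 = 0))

/-- A dimer tiling (perfect matching) of `ℤ³`, encoded by the involution sending each vertex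
to the vertex it is matched with. -/
def IsTiling (m : V → V) : Prop := (∀ x, Adj x (m x)) ∧ ∀ x, m (m x) = x

/-- `Omega` is the space of dimer tilings of `ℤ³`. -/
abbrev Omega : Type := {m : V → V // IsTiling m}

/-- Two grid edges are parallel if they are translates of each other. -/
def Parallel (e₁ e₂ : Sym2 V) : Prop := ∃ v : V, Sym2.map (fun y => y + v) e₁ = e₂

/-- `InCube x y` says that `y` lies in the unit lattice cube `x + {0,1}³`. -/
def InCube (x y : V) : Prop := ∀ i : Fin 3, y i = x i ∨ y i = x i + 1


/-! Double counting of the pairs (vertex, unit cube of the box containing it). A vertex `x` lies in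
at most twice as many unit cubes of the box as its domino `{x, m x}` does, and at the corner `1`
in fewer than twice as many. Every unit cube has 8 vertices, so summing over the box shows that
some cube contains more than four vertices whose partner lies in the same cube, i.e. three
dominoes. Three disjoint dominoes of a cube either point in three directions (a trit), or two of
them are parallel. Two parallel dominoes are opposite sides of a square (a flip) unless they sit
diagonally; then the third domino cannot cross them, so it is parallel to them and forms a flip
with one of them. -/

open Finset

instance (x y : V) : Decidable (InCube x y) :=
  inferInstanceAs (Decidable (∀ i : Fin 3, y i = x i ∨ y i = x i + 1))

def HasFlip (τ : Set (Sym2 V)) : Prop :=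
  ∃ (x : V) (i j : Fin 3), i ≠ j ∧ s(x, x + unitVec i) ∈ τ ∧
    s(x + unitVec j, x + unitVec i + unitVec j) ∈ τ

def HasTrit (τ : Set (Sym2 V)) : Prop :=
  ∃ (x : V) (e₁ e₂ e₃ : Sym2 V), e₁ ∈ τ ∧ e₂ ∈ τ ∧ e₃ ∈ τ ∧
    ¬ Parallel e₁ e₂ ∧ ¬ Parallel e₁ e₃ ∧ ¬ Parallel e₂ e₃ ∧
    (∀ y ∈ e₁, InCube x y) ∧ (∀ y ∈ e₂, InCube x y) ∧ (∀ y ∈ e₃, InCube x y)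

@[simp]
lemma add_unitVec_apply_self (x : V) (i : Fin 3) : (x + unitVec i) i = x i + 1 := by
  simp [unitVec]

@[simp]
lemma add_unitVec_apply_of_ne (x : V) {i j : Fin 3} (h : j ≠ i) : (x + unitVec i) j = x j := by
  simp [unitVec, h]

lemma exists_eq_add_unitVec_of_adj {x y : V} (h : Adj x y) :
    ∃ (a : V) (d : Fin 3), s(x, y) = s(a, a + unitVec d) := by
  obtain ⟨d, rfl | rfl⟩ := h
  exacts [⟨x, d, rfl⟩, ⟨y, d, Sym2.eq_swap⟩]

lemma Adj.symm {x y : V} (h : Adj x y) : Adj y x := by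
  obtain ⟨i, h | h⟩ := h
  exacts [⟨i, .inr h⟩, ⟨i, .inl h⟩]

lemma not_parallel_of_ne (a b : V) {i j : Fin 3} (hij : i ≠ j) :
    ¬ Parallel s(a, a + unitVec i) s(b, b + unitVec j) := by
  rintro ⟨v, hv⟩
  rw [Sym2.map_mk, Sym2.eq_iff] at hv
  rcases hv with ⟨h1, h2⟩ | ⟨h1, h2⟩ <;>
  · have e1 := congrFun h1 i
    have e2 := congrFun h2 i
    simp [unitVec, hij] at e1 e2
    omega

lemma eq_add_unitVec_of_forall_ne {a b : V} {d : Fin 3} (h : ∀ l ≠ d, b l = a l)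
    (hd : b d = a d + 1) : b = a + unitVec d := by
  funext l
  by_cases hl : l = d
  · subst hl; rw [add_unitVec_apply_self, hd]
  · rw [add_unitVec_apply_of_ne _ hl, h l hl]

lemma mem_edge_of_forall_ne {w a : V} {d : Fin 3} (h : ∀ l ≠ d, w l = a l)
    (hd : w d = a d ∨ w d = a d + 1) : w ∈ s(a, a + unitVec d) := by
  rcases hd with hd | hd
  · exact Sym2.mem_iff.mpr (Or.inl (funext fun l => if hl : l = d then hl ▸ hd else h l hl))
  · exact Sym2.mem_iff.mpr (Or.inr (eq_add_unitVec_of_forall_ne h hd))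

lemma InCube.apply_eq_of_add_unitVec {p a : V} {d : Fin 3} (ha : InCube p a)
    (ha' : InCube p (a + unitVec d)) : a d = p d := by
  have := ha' d
  simp only [add_unitVec_apply_self] at this
  have := ha d
  omega

lemma exists_third_index (d j : Fin 3) : ∃ k, k ≠ d ∧ k ≠ j := by
  revert d j; decide

section Cube

variable {τ : Set (Sym2 V)} {p : V}

lemma hasFlip_of_add_unitVec {a : V} {d t : Fin 3} (htd : t ≠ d) (ha : s(a, a + unitVec d) ∈ τ)
    (hb : s(a + unitVec t, a + unitVec t + unitVec d) ∈ τ) : HasFlip τ :=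
  ⟨a, d, t, htd.symm, ha, add_right_comm a (unitVec t) (unitVec d) ▸ hb⟩

lemma hasFlip_of_parallel {a b : V} {d t : Fin 3} (ha : InCube p a) (hb : InCube p b)
    (had : a d = b d) (htd : t ≠ d) (hat : a t = b t) (hab : a ≠ b)
    (hτa : s(a, a + unitVec d) ∈ τ) (hτb : s(b, b + unitVec d) ∈ τ) : HasFlip τ := by
  obtain ⟨k, hkd, hkt⟩ := exists_third_index d t
  have hagree : ∀ l ≠ k, b l = a l := fun l hl => by
    rcases (by omega : l = d ∨ l = t) with rfl | rfl <;> simp [had, hat]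
  have hk : a k ≠ b k := fun h => hab (funext fun l => by
    by_cases hl : l = k
    · exact hl ▸ h
    · exact (hagree l hl).symm)
  rcases ha k, hb k with ⟨ha | ha, hb | hb⟩
  · omega
  · exact hasFlip_of_add_unitVec hkd hτa (eq_add_unitVec_of_forall_ne hagree (by omega) ▸ hτb)
  · exact hasFlip_of_add_unitVec hkd hτb
      (eq_add_unitVec_of_forall_ne (fun l hl => (hagree l hl).symm) (by omega) ▸ hτa)
  · omega

/-- The common vertex takes its `d`-coordinate from `c` and the others from `a`. -/
lemma exists_mem_of_forall_ne {a c : V} {d f : Fin 3} (ha : InCube p a) (had : a d = p d)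
    (hc : InCube p c) (hcf : c f = p f) (hfd : f ≠ d) (h : ∀ l, l ≠ d → l ≠ f → c l = a l) :
    ∃ w, w ∈ s(a, a + unitVec d) ∧ w ∈ s(c, c + unitVec f) := by
  refine ⟨Function.update a d (c d), mem_edge_of_forall_ne (fun l hl => ?_) ?_,
    mem_edge_of_forall_ne (fun l hl => ?_) ?_⟩
  · exact Function.update_of_ne hl _ _
  · rw [Function.update_self]; have := hc d; omega
  · by_cases hld : l = d
    · subst hld; exact Function.update_self _ _ _
    · rw [Function.update_of_ne hld, h l hld hl]
  · rw [Function.update_of_ne hfd]; have := ha f; omega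

lemma hasFlip_of_two_parallel
    (hdisj : ∀ e₁ ∈ τ, ∀ e₂ ∈ τ, ∀ w ∈ e₁, w ∈ e₂ → e₁ = e₂)
    {a b c : V} {d f : Fin 3} (ha : InCube p a) (had : a d = p d) (hb : InCube p b)
    (hbd : b d = p d) (hc : InCube p c) (hcf : c f = p f) (hτa : s(a, a + unitVec d) ∈ τ)
    (hτb : s(b, b + unitVec d) ∈ τ) (hτc : s(c, c + unitVec f) ∈ τ) (hab : a ≠ b)
    (hac : s(a, a + unitVec d) ≠ s(c, c + unitVec f))
    (hbc : s(b, b + unitVec d) ≠ s(c, c + unitVec f)) : HasFlip τ := by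
  by_cases hagree : ∃ t ≠ d, a t = b t
  · obtain ⟨t, htd, hat⟩ := hagree
    exact hasFlip_of_parallel ha hb (had.trans hbd.symm) htd hat hab hτa hτb
  push Not at hagree
  -- `a` and `b` are diagonal, so every transverse coordinate of `c` is that of `a` or of `b`
  have hcab : ∀ t ≠ d, c t = a t ∨ c t = b t := fun t htd => by
    have := hagree t htd; have := ha t; have := hb t; have := hc t; omega
  by_cases hfd : f = d
  · subst hfd
    by_cases hcagree : ∃ t ≠ f, a t = c t
    · obtain ⟨t, htd, hat⟩ := hcagree
      exact hasFlip_of_parallel ha hc (had.trans hcf.symm) htd hat (fun h => hac (h ▸ rfl))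
        hτa hτc
    push Not at hcagree
    refine absurd (funext fun t => ?_) (fun h : b = c => hbc (h ▸ rfl))
    by_cases htd : t = f
    · subst htd; omega
    · have := hcagree t htd; have := hcab t htd; omega
  · obtain ⟨k, hkd, hkf⟩ := exists_third_index d f
    have hthird : ∀ l, l ≠ d → l ≠ f → l = k := fun l h1 h2 => by omega
    rcases hcab k hkd with hk | hk
    · obtain ⟨w, hwa, hwc⟩ := exists_mem_of_forall_ne ha had hc hcf hfd
        fun l h1 h2 => hthird l h1 h2 ▸ hk
      exact absurd (hdisj _ hτa _ hτc w hwa hwc) hac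
    · obtain ⟨w, hwb, hwc⟩ := exists_mem_of_forall_ne hb hbd hc hcf hfd
        fun l h1 h2 => hthird l h1 h2 ▸ hk
      exact absurd (hdisj _ hτb _ hτc w hwb hwc) hbc

lemma inCube_and_apply_eq_of_forall_mem {a : V} {d : Fin 3}
    (h : ∀ y ∈ s(a, a + unitVec d), InCube p y) : InCube p a ∧ a d = p d :=
  ⟨h a (Sym2.mem_mk_left _ _),
    (h a (Sym2.mem_mk_left _ _)).apply_eq_of_add_unitVec (h _ (Sym2.mem_mk_right _ _))⟩

theorem hasFlip_or_hasTrit_of_three_edges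
    (hgrid : ∀ e ∈ τ, ∃ (a : V) (d : Fin 3), e = s(a, a + unitVec d))
    (hdisj : ∀ e₁ ∈ τ, ∀ e₂ ∈ τ, ∀ w ∈ e₁, w ∈ e₂ → e₁ = e₂)
    {e₁ e₂ e₃ : Sym2 V} (h₁ : e₁ ∈ τ) (h₂ : e₂ ∈ τ) (h₃ : e₃ ∈ τ)
    (h₁₂ : e₁ ≠ e₂) (h₁₃ : e₁ ≠ e₃) (h₂₃ : e₂ ≠ e₃) (hc₁ : ∀ y ∈ e₁, InCube p y)
    (hc₂ : ∀ y ∈ e₂, InCube p y) (hc₃ : ∀ y ∈ e₃, InCube p y) : HasFlip τ ∨ HasTrit τ := by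
  obtain ⟨a₁, d₁, rfl⟩ := hgrid _ h₁
  obtain ⟨a₂, d₂, rfl⟩ := hgrid _ h₂
  obtain ⟨a₃, d₃, rfl⟩ := hgrid _ h₃
  obtain ⟨ha₁, had₁⟩ := inCube_and_apply_eq_of_forall_mem hc₁
  obtain ⟨ha₂, had₂⟩ := inCube_and_apply_eq_of_forall_mem hc₂
  obtain ⟨ha₃, had₃⟩ := inCube_and_apply_eq_of_forall_mem hc₃
  by_cases d₁₂ : d₁ = d₂
  · subst d₁₂
    exact .inl <| hasFlip_of_two_parallel hdisj ha₁ had₁ ha₂ had₂ ha₃ had₃ h₁ h₂ h₃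
      (fun h => h₁₂ (h ▸ rfl)) h₁₃ h₂₃
  by_cases d₁₃ : d₁ = d₃
  · subst d₁₃
    exact .inl <| hasFlip_of_two_parallel hdisj ha₁ had₁ ha₃ had₃ ha₂ had₂ h₁ h₃ h₂
      (fun h => h₁₃ (h ▸ rfl)) h₁₂ h₂₃.symm
  by_cases d₂₃ : d₂ = d₃
  · subst d₂₃
    exact .inl <| hasFlip_of_two_parallel hdisj ha₂ had₂ ha₃ had₃ ha₁ had₁ h₂ h₃ h₁
      (fun h => h₂₃ (h ▸ rfl)) h₁₂.symm h₁₃.symm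
  exact .inr ⟨p, _, _, _, h₁, h₂, h₃, not_parallel_of_ne _ _ d₁₂, not_parallel_of_ne _ _ d₁₃,
    not_parallel_of_ne _ _ d₂₃, hc₁, hc₂, hc₃⟩

end Cube

lemma card_le_two_mul_card_image_sym2 {α : Type*} [DecidableEq α] (s : Finset α) (f : α → α) :
    #s ≤ 2 * #(s.image fun x => s(x, f x)) := by
  refine card_le_mul_card_image s 2 fun e he => ?_
  obtain ⟨x, -, rfl⟩ := mem_image.mp he
  refine (card_le_card fun y hy => ?_).trans (card_le_two (a := x) (b := f x))
  rcases Sym2.eq_iff.mp (mem_filter.mp hy).2 with ⟨rfl, -⟩ | ⟨rfl, -⟩ <;> simp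

lemma card_filter_Icc_pi {ι α : Type*} [Fintype ι] [DecidableEq ι] [PartialOrder α]
    [LocallyFiniteOrder α] [DecidableEq α] (a b : ι → α) (Q : (ι → α) → Prop) [DecidablePred Q]
    (P : ι → α → Prop) [∀ i, DecidablePred (P i)] (hQ : ∀ x, Q x ↔ ∀ i, P i (x i)) :
    #{x ∈ Icc a b | Q x} = ∏ i, #{t ∈ Icc (a i) (b i) | P i t} := by
  rw [← Fintype.card_piFinset]
  congr 1
  ext x
  simp only [mem_filter, Fintype.mem_piFinset, mem_Icc, Pi.le_def, hQ, forall_and]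

lemma card_filter_inCube_Icc {n p : V} (hp : p ∈ Icc 1 (n - 1)) :
    #{x ∈ Icc 1 n | InCube p x} = 8 := by
  rw [card_filter_Icc_pi _ _ (fun x => InCube p x) (fun i t => t = p i ∨ t = p i + 1)
    fun _ => Iff.rfl]
  have hpair : ∀ i, #{t ∈ Icc (1 : ℤ) (n i) | t = p i ∨ t = p i + 1} = 2 := fun i => by
    have := (mem_Icc.mp hp).1 i; have := (mem_Icc.mp hp).2 i
    simp only [Pi.one_apply, Pi.sub_apply] at *
    rw [show {t ∈ Icc (1 : ℤ) (n i) | t = p i ∨ t = p i + 1} = {p i, p i + 1} by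
      ext t; simp only [mem_filter, mem_Icc, mem_insert, mem_singleton]; omega]
    exact card_pair (by omega)
  simp [hpair]

lemma card_filter_inCube_le_two_mul {n x y : V} (hx : x ∈ Icc 1 n) (hy : y ∈ Icc 1 n)
    (h : Adj x y) :
    #{p ∈ Icc 1 (n - 1) | InCube p x} ≤ 2 * #{p ∈ Icc 1 (n - 1) | InCube p x ∧ InCube p y} := by
  obtain ⟨i, hxy, hi⟩ : ∃ i, (∀ j ≠ i, y j = x j) ∧ (y i = x i + 1 ∨ x i = y i + 1) := by
    obtain ⟨i, rfl | rfl⟩ := h <;>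
      exact ⟨i, fun j hj => by simp [unitVec, hj], by simp [unitVec]⟩
  rw [card_filter_Icc_pi _ _ (fun p => InCube p x) (fun j t => x j = t ∨ x j = t + 1)
      fun _ => Iff.rfl,
    card_filter_Icc_pi _ _ (fun p => InCube p x ∧ InCube p y)
      (fun j t => (x j = t ∨ x j = t + 1) ∧ (y j = t ∨ y j = t + 1)) fun _ => forall_and.symm,
    ← mul_prod_erase _ _ (mem_univ i), ← mul_prod_erase _ _ (mem_univ i)]
  have := (mem_Icc.mp hx).1 i; have := (mem_Icc.mp hx).2 i
  have := (mem_Icc.mp hy).1 i; have := (mem_Icc.mp hy).2 i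
  simp only [Pi.one_apply, Pi.sub_apply] at *
  have hW : #{t ∈ Icc (1 : ℤ) (n i - 1) | x i = t ∨ x i = t + 1} ≤ 2 := by
    refine (card_le_card (t := {x i - 1, x i}) fun t ht => ?_).trans card_le_two
    simp only [mem_filter, mem_insert, mem_singleton] at ht ⊢
    omega
  have hT :
      #{t ∈ Icc (1 : ℤ) (n i - 1) | (x i = t ∨ x i = t + 1) ∧ (y i = t ∨ y i = t + 1)} = 1 :=
    card_eq_one.mpr ⟨min (x i) (y i), by
      ext t; simp only [mem_filter, mem_Icc, mem_singleton]; omega⟩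
  refine (Nat.mul_le_mul_right _ hW).trans_eq ?_
  rw [hT, one_mul]
  exact congrArg _ <| prod_congr rfl fun j hj => by
    simp only [hxy j (ne_of_mem_erase hj), and_self]

lemma card_filter_inCube_one_lt {n y : V} (hn : ∀ i, 2 ≤ n i) (hy : InCube 1 y) :
    #{p ∈ Icc 1 (n - 1) | InCube p 1} < 2 * #{p ∈ Icc 1 (n - 1) | InCube p 1 ∧ InCube p y} := by
  have hone : (1 : V) ∈ Icc 1 (n - 1) :=
    mem_Icc.mpr ⟨le_rfl, fun i => by have := hn i; simp only [Pi.one_apply, Pi.sub_apply]; omega⟩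
  have hW : #{p ∈ Icc 1 (n - 1) | InCube p 1} ≤ 1 := by
    refine card_le_one_iff_subset_singleton.mpr ⟨1, fun p hp => mem_singleton.mpr ?_⟩
    obtain ⟨hp, hp1⟩ := mem_filter.mp hp
    funext i
    have := (mem_Icc.mp hp).1 i; have := hp1 i
    simp only [Pi.one_apply] at *
    omega
  have hT : 0 < #{p ∈ Icc 1 (n - 1) | InCube p 1 ∧ InCube p y} :=
    card_pos.mpr ⟨1, mem_filter.mpr ⟨hone, fun _ => Or.inl rfl, hy⟩⟩
  omega

lemma inCube_one_of_adj {y : V} (h : Adj 1 y) (hy : 1 ≤ y) : InCube 1 y := by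
  obtain ⟨i, rfl | h⟩ := h
  · intro j
    by_cases hj : j = i
    · subst hj; simp [unitVec]
    · simp [unitVec, hj]
  · have := congrFun h i
    have := hy i
    simp only [add_unitVec_apply_self, Pi.one_apply] at *
    omega

theorem exists_four_lt_card_filter_inCube {n : V} (hn : ∀ i, 2 ≤ n i) (m : V → V)
    (hm : ∀ x ∈ Icc 1 n, m x ∈ Icc 1 n ∧ Adj x (m x)) :
    ∃ p, 4 < #{x ∈ Icc 1 n | InCube p x ∧ InCube p (m x)} := by
  by_contra! h
  have hone : (1 : V) ∈ Icc 1 n :=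
    mem_Icc.mpr ⟨le_rfl, fun i => by have := hn i; simp only [Pi.one_apply]; omega⟩
  have hW : ∑ x ∈ Icc 1 n, #{p ∈ Icc 1 (n - 1) | InCube p x} = ∑ p ∈ Icc 1 (n - 1), 8 :=
    (sum_card_bipartiteAbove_eq_sum_card_bipartiteBelow fun x p => InCube p x).trans
      (sum_congr rfl fun p hp => card_filter_inCube_Icc hp)
  have hT : ∑ x ∈ Icc 1 n, #{p ∈ Icc 1 (n - 1) | InCube p x ∧ InCube p (m x)} ≤
      ∑ p ∈ Icc 1 (n - 1), 4 :=
    (sum_card_bipartiteAbove_eq_sum_card_bipartiteBelow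
      fun x p => InCube p x ∧ InCube p (m x)).trans_le (sum_le_sum fun p _ => h p)
  have hlt := sum_lt_sum (s := Icc 1 n)
    (fun x hx => card_filter_inCube_le_two_mul hx (hm x hx).1 (hm x hx).2)
    ⟨1, hone, card_filter_inCube_one_lt hn
      (inCube_one_of_adj (hm 1 hone).2 (mem_Icc.mp (hm 1 hone).1).1)⟩
  rw [← mul_sum] at hlt
  simp only [sum_const, smul_eq_mul] at hW hT
  omega

theorem hasFlip_or_hasTrit_of_four_lt_card {τ : Set (Sym2 V)} {p : V}
    (hgrid : ∀ e ∈ τ, ∃ (a : V) (d : Fin 3), e = s(a, a + unitVec d))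
    (hdisj : ∀ e₁ ∈ τ, ∀ e₂ ∈ τ, ∀ w ∈ e₁, w ∈ e₂ → e₁ = e₂) (m : V → V) (S : Finset V)
    (hS : ∀ x ∈ S, s(x, m x) ∈ τ ∧ InCube p x ∧ InCube p (m x)) (hcard : 4 < #S) :
    HasFlip τ ∨ HasTrit τ := by
  have hedge : ∀ e ∈ S.image fun x => s(x, m x), e ∈ τ ∧ ∀ y ∈ e, InCube p y := by
    simp only [mem_image]
    rintro _ ⟨x, hx, rfl⟩
    obtain ⟨hτ, hxp, hmxp⟩ := hS x hx
    exact ⟨hτ, fun y hy => by rcases Sym2.mem_iff.mp hy with rfl | rfl <;> assumption⟩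
  have := card_le_two_mul_card_image_sym2 S m
  obtain ⟨e₁, e₂, e₃, h₁, h₂, h₃, h₁₂, h₁₃, h₂₃⟩ := two_lt_card_iff.mp
    (by omega : 2 < #(S.image fun x => s(x, m x)))
  exact hasFlip_or_hasTrit_of_three_edges hgrid hdisj (hedge _ h₁).1 (hedge _ h₂).1
    (hedge _ h₃).1 h₁₂ h₁₃ h₂₃ (hedge _ h₁).2 (hedge _ h₂).2 (hedge _ h₃).2

section Matching

variable {R : Set V} {τ : Set (Sym2 V)}

lemma eq_of_mem_of_mem_of_perfectMatching
    (hedges : ∀ e ∈ τ, ∃ u v : V, e = s(u, v) ∧ Adj u v ∧ u ∈ R ∧ v ∈ R)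
    (hmatch : ∀ x ∈ R, ∃! e, e ∈ τ ∧ x ∈ e) :
    ∀ e₁ ∈ τ, ∀ e₂ ∈ τ, ∀ w ∈ e₁, w ∈ e₂ → e₁ = e₂ := by
  intro e₁ h₁ e₂ h₂ w hw₁ hw₂
  obtain ⟨u, v, rfl, -, hu, hv⟩ := hedges e₁ h₁
  have hw : w ∈ R := by rcases Sym2.mem_iff.mp hw₁ with rfl | rfl <;> assumption
  exact (hmatch w hw).unique ⟨h₁, hw₁⟩ ⟨h₂, hw₂⟩

lemma exists_partner_of_perfectMatching
    (hedges : ∀ e ∈ τ, ∃ u v : V, e = s(u, v) ∧ Adj u v ∧ u ∈ R ∧ v ∈ R)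
    (hmatch : ∀ x ∈ R, ∃! e, e ∈ τ ∧ x ∈ e) :
    ∃ m : V → V, ∀ x ∈ R, s(x, m x) ∈ τ ∧ m x ∈ R ∧ Adj x (m x) := by
  have : ∀ x, ∃ y, x ∈ R → s(x, y) ∈ τ ∧ y ∈ R ∧ Adj x y := fun x => by
    by_cases hx : x ∈ R
    · obtain ⟨e, ⟨he, hxe⟩, -⟩ := hmatch x hx
      obtain ⟨u, v, rfl, huv, hu, hv⟩ := hedges e he
      rcases Sym2.mem_iff.mp hxe with rfl | rfl
      · exact ⟨v, fun _ => ⟨he, hv, huv⟩⟩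
      · exact ⟨u, fun _ => ⟨Sym2.eq_swap ▸ he, hu, huv.symm⟩⟩
    · exact ⟨x, fun h => absurd h hx⟩
  choose m hm using this
  exact ⟨m, hm⟩

end Matching

theorem statement3_general (n₁ n₂ n₃ : ℤ) (h₁ : 2 ≤ n₁) (h₂ : 2 ≤ n₂) (h₃ : 2 ≤ n₃)
    (R : Set V)
    (hR : R = {x : V | (1 ≤ x 0 ∧ x 0 ≤ n₁) ∧ (1 ≤ x 1 ∧ x 1 ≤ n₂) ∧ (1 ≤ x 2 ∧ x 2 ≤ n₃)})
    (τ : Set (Sym2 V))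
    (hedges : ∀ e ∈ τ, ∃ u v : V, e = s(u, v) ∧ Adj u v ∧ u ∈ R ∧ v ∈ R)
    (hmatch : ∀ x ∈ R, ∃! e, e ∈ τ ∧ x ∈ e) :
    (∃ (x : V) (i j : Fin 3), i ≠ j ∧ s(x, x + unitVec i) ∈ τ ∧
        s(x + unitVec j, x + unitVec i + unitVec j) ∈ τ) ∨
      (∃ (x : V) (e₁ e₂ e₃ : Sym2 V), e₁ ∈ τ ∧ e₂ ∈ τ ∧ e₃ ∈ τ ∧
        ¬ Parallel e₁ e₂ ∧ ¬ Parallel e₁ e₃ ∧ ¬ Parallel e₂ e₃ ∧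
        (∀ y ∈ e₁, InCube x y) ∧ (∀ y ∈ e₂, InCube x y) ∧ (∀ y ∈ e₃, InCube x y)) := by
  set n : V := ![n₁, n₂, n₃]
  have hn : ∀ i, 2 ≤ n i := fun i => by fin_cases i <;> assumption
  have hRn : R = ↑(Icc 1 n) := by
    ext x
    simp [hR, Pi.le_def, Fin.forall_fin_succ, n]
    tauto
  subst hRn
  obtain ⟨m, hm⟩ := exists_partner_of_perfectMatching hedges hmatch
  obtain ⟨p, hp⟩ := exists_four_lt_card_filter_inCube hn m fun x hx => (hm x hx).2
  refine hasFlip_or_hasTrit_of_four_lt_card (p := p) (fun e he => ?_)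
    (eq_of_mem_of_mem_of_perfectMatching hedges hmatch) m _ (fun x hx => ?_) hp
  · obtain ⟨u, v, rfl, huv, -⟩ := hedges e he
    exact exists_eq_add_unitVec_of_adj huv
  · obtain ⟨hx, hxp⟩ := mem_filter.mp hx
    exact ⟨(hm x hx).1, hxp⟩

/-- **Every dimer tiling of a box admits a flip or a trit.** If `n₁, n₂, n₃ ≥ 2` with
`n₁n₂n₃` even and `τ` is a perfect matching of the induced subgraph of the grid graph on
`R = {1,…,n₁}×{1,…,n₂}×{1,…,n₃}`, then either two edges of `τ` form opposite sides of a unit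
lattice square, or three pairwise non-parallel edges of `τ` lie in a single unit lattice
cube. -/
theorem statement3 (n₁ n₂ n₃ : ℤ) (h₁ : 2 ≤ n₁) (h₂ : 2 ≤ n₂) (h₃ : 2 ≤ n₃)
    (heven : Even (n₁ * n₂ * n₃))
    (R : Set V)
    (hR : R = {x : V | (1 ≤ x 0 ∧ x 0 ≤ n₁) ∧ (1 ≤ x 1 ∧ x 1 ≤ n₂) ∧ (1 ≤ x 2 ∧ x 2 ≤ n₃)})
    (τ : Set (Sym2 V))
    (hedges : ∀ e ∈ τ, ∃ u v : V, e = s(u, v) ∧ Adj u v ∧ u ∈ R ∧ v ∈ R)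
    (hmatch : ∀ x ∈ R, ∃! e, e ∈ τ ∧ x ∈ e) :
    (∃ (x : V) (i j : Fin 3), i ≠ j ∧ s(x, x + unitVec i) ∈ τ ∧
        s(x + unitVec j, x + unitVec i + unitVec j) ∈ τ) ∨
      (∃ (x : V) (e₁ e₂ e₃ : Sym2 V), e₁ ∈ τ ∧ e₂ ∈ τ ∧ e₃ ∈ τ ∧
        ¬ Parallel e₁ e₂ ∧ ¬ Parallel e₁ e₃ ∧ ¬ Parallel e₂ e₃ ∧
        (∀ y ∈ e₁, InCube x y) ∧ (∀ y ∈ e₂, InCube x y) ∧ (∀ y ∈ e₃, InCube x y)) :=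
  statement3_general n₁ n₂ n₃ h₁ h₂ h₃ R hR τ hedges hmatch

end Dimers
end

section
/- For every integer k ≥ 2 there exists an invariant Borel probability measure μ on Ω that is k-Gibbs but is not a Gibbs measure. -/
/-!
For `c ∈ ℤ/2n` let `σ_c` be the tiling in which every layer `x₁ = t` is a slab: its even vertices
are matched along `+e₃` if `t ≡ c`, along `-e₃` if `t ≡ c + n`, and along `+e₁` otherwise
(mod `2n`). Even translations permute the `σ_c`, so their uniform average `μ` is invariant.

Two tilings `τ, τ'` that differ only on a finite set `D` differ by alternating cycles. If `τ = σ_c`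
on a box of side `k ≤ n`, the box meets at most one of the two kinds of slab, so `τ` matches every
even vertex of `D` along `e₁` or along one fixed `s = ±e₃`, depending only on its layer. The
potential `x₀ + s₂ x₂` rises by exactly one along these dimers and by at most one along any dimer,
while both matchings of `D` have the same total rise; hence `τ'` matches each even vertex of `D`
along the other one of `e₁`, `s`. Counting once more with `x₀` weighted by a sign depending on the
layer, `τ` now rises by one more than `τ'` at every even vertex of `D`, so `D = ∅`: the `σ_c` are
frozen on `k`-boxes and `μ` is `k`-Gibbs.

On the other hand `σ_0` has a finite alternating cycle winding around the square `[0, n]²` of the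
`(x₁, x₂)`-plane. Rotating it yields a tiling that agrees with `σ_0` outside the cube `[-n, n]³` but
with no `σ_c` inside it, so the Gibbs condition fails on that cube.
-/

open MeasureTheory Filter

namespace Dimers

theorem isTiling_translate {m : V → V} (h : IsTiling m) (v : V) :
    IsTiling fun x => m (x - v) + v := by
  obtain ⟨h1, h2⟩ := h
  constructor
  · intro x
    show Adj x (m (x - v) + v)
    obtain ⟨i, hi | hi⟩ := h1 (x - v)
    · exact ⟨i, Or.inl (by rw [hi]; abel)⟩
    · refine ⟨i, Or.inr ?_⟩
      rw [sub_eq_iff_eq_add] at hi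
      exact hi.trans (by abel)
  · intro x
    show m (m (x - v) + v - v) + v = x
    have h3 : m (x - v) + v - v = m (x - v) := by abel
    rw [h3, h2]
    abel

/-- Translation of a tiling by the vector `v`. -/
def translate (v : V) (τ : Omega) : Omega :=
  ⟨fun x => τ.1 (x - v) + v, isTiling_translate τ.2 v⟩

/-- A measure on `Omega` is invariant if it is preserved by translation by every even vector. -/
def Invariant (μ : Measure Omega) : Prop :=
  ∀ v : V, IsEven v → Measure.map (translate v) μ = μ

/-- An invariant measure is ergodic if every Borel set invariant under all even translations
has measure `0` or `1`. -/
def IsErgodicMeasure (μ : Measure Omega) : Prop :=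
  Invariant μ ∧ ∀ A : Set Omega, MeasurableSet A →
    (∀ v : V, IsEven v → translate v ⁻¹' A = A) → μ A = 0 ∨ μ A = 1

/-- The mean current of a measure on `Omega`: the `i`-th coordinate is
`μ{τ : e_i ∈ τ} − μ{τ : −e_i ∈ τ}`. -/
noncomputable def meanCurrent (μ : Measure Omega) : Fin 3 → ℝ := fun i =>
  (μ {τ : Omega | τ.1 0 = unitVec i}).toReal - (μ {τ : Omega | τ.1 0 = -unitVec i}).toReal

/-- The mean-current octahedron `O`. -/
def Oct : Set (Fin 3 → ℝ) := {s | |s 0| + |s 1| + |s 2| ≤ 1}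

/-- The Shannon entropy `H_Λ(μ)` of the restriction of `μ` to the finite window `Λ`
(the restriction of a tiling to `Λ` records the partner of every vertex of `Λ`, i.e. all
edges with at least one endpoint in `Λ`). -/
noncomputable def boxEntropy (Λ : Finset V) (μ : Measure Omega) : ℝ :=
  ∑' σ : (↥Λ → V), Real.negMulLog (μ {τ : Omega | ∀ x : ↥Λ, τ.1 x.1 = σ x}).toReal

/-- The cube `Λ_n = ([-n,n] ∩ ℤ)³`. -/
noncomputable def cube (n : ℕ) : Finset V := Fintype.piFinset fun _ : Fin 3 => Finset.Icc (-(n : ℤ)) (n : ℤ)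

/-- The specific entropy (entropy per site) of a measure on `Omega`. -/
noncomputable def specificEntropy (μ : Measure Omega) : ℝ :=
  limsup (fun n : ℕ => boxEntropy (cube n) μ / ((cube n).card : ℝ)) atTop

/-- The mean-current entropy function `ent`. -/
noncomputable def ent (s : Fin 3 → ℝ) : ℝ :=
  sSup {h : ℝ | ∃ μ : Measure Omega, IsProbabilityMeasure μ ∧ Invariant μ ∧
    meanCurrent μ = s ∧ specificEntropy μ = h}

/-- The uniform Gibbs condition in the finite window `Λ`: any two boundary-compatible
configurations (tilings whose symmetric difference consists of edges with both endpoints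
in `Λ`) give cylinder sets of equal measure. -/
def GibbsCond (μ : Measure Omega) (Λ : Finset V) : Prop :=
  ∀ τ τ' : Omega,
    (∀ x : V, τ.1 x ≠ τ'.1 x → x ∈ Λ ∧ τ.1 x ∈ Λ ∧ τ'.1 x ∈ Λ) →
    μ {σ : Omega | ∀ x ∈ Λ, σ.1 x = τ.1 x} = μ {σ : Omega | ∀ x ∈ Λ, σ.1 x = τ'.1 x}

/-- A (uniform) Gibbs measure. -/
def IsGibbs (μ : Measure Omega) : Prop :=
  Invariant μ ∧ ∀ Λ : Finset V, GibbsCond μ Λ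

/-- The cubic box `x + {0,1,…,k−1}³`. -/
noncomputable def kbox (k : ℕ) (x : V) : Finset V :=
  Fintype.piFinset fun i : Fin 3 => Finset.Icc (x i) (x i + (k : ℤ) - 1)

/-- An invariant measure is `k`-Gibbs if the uniform Gibbs condition holds for all cubic
boxes of side length `k`. -/
def IsKGibbs (k : ℕ) (μ : Measure Omega) : Prop :=
  Invariant μ ∧ ∀ x : V, GibbsCond μ (kbox k x)


open scoped ENNReal

lemma isEven_of_adj {x y : V} (h : Adj x y) : IsEven y ↔ ¬ IsEven x := by
  obtain ⟨i, rfl | rfl⟩ := h <;> fin_cases i <;> simp [IsEven, unitVec] <;> omega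

lemma isEven_sub_iff {x v : V} (hv : IsEven v) : IsEven (x - v) ↔ IsEven x := by
  unfold IsEven at *
  simp only [Pi.sub_apply]
  omega

lemma adj_add_and_sub {x u : V} (hu : ∃ j, u = unitVec j ∨ u = -unitVec j) :
    Adj x (x + u) ∧ Adj x (x - u) := by
  obtain ⟨j, rfl | rfl⟩ := hu
  · exact ⟨⟨j, Or.inl rfl⟩, ⟨j, Or.inr (by abel)⟩⟩
  · exact ⟨⟨j, Or.inr (by abel)⟩, ⟨j, Or.inl (by abel)⟩⟩

def layeredMap (i : Fin 3) (dir : ℤ → V) (x : V) : V :=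
  if IsEven x then x + dir (x i) else x - dir (x i)

theorem isTiling_layeredMap {i : Fin 3} {dir : ℤ → V} (hdir : ∀ t, dir t i = 0)
    (hunit : ∀ t, ∃ j, dir t = unitVec j ∨ dir t = -unitVec j) :
    IsTiling (layeredMap i dir) := by
  have hadj : ∀ x, Adj x (layeredMap i dir x) := fun x => by
    unfold layeredMap
    split_ifs
    exacts [(adj_add_and_sub (hunit _)).1, (adj_add_and_sub (hunit _)).2]
  refine ⟨hadj, fun x => ?_⟩
  have hpar := isEven_of_adj (hadj x)
  by_cases hx : IsEven x
  · have hy : (x + dir (x i)) i = x i := by simp [hdir]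
    simp only [layeredMap, hx, if_true] at hpar ⊢
    simp [hpar, hy]
  · have hy : (x - dir (x i)) i = x i := by simp [hdir]
    simp only [layeredMap, hx, if_false] at hpar ⊢
    simp [hpar, hy]

lemma translate_layeredMap {i : Fin 3} {dir : ℤ → V} {v : V} (hv : IsEven v) (x : V) :
    layeredMap i dir (x - v) + v = layeredMap i (fun t => dir (t - v i)) x := by
  simp only [layeredMap, isEven_sub_iff hv, Pi.sub_apply]
  split_ifs <;> abel

lemma layeredMap_apply (i j : Fin 3) (dir : ℤ → V) (x : V) :
    layeredMap i dir x j =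
      x j + (if (x 0 + x 1 + x 2) % 2 = 0 then dir (x i) j else -dir (x i) j) := by
  by_cases h : IsEven x
  · simp [layeredMap, h, show (x 0 + x 1 + x 2) % 2 = 0 from h]
  · simp [layeredMap, h, show ¬ (x 0 + x 1 + x 2) % 2 = 0 from h, sub_eq_add_neg]

theorem isTiling_piecewise {m f : V → V} (hm : IsTiling m) (hf : IsTiling f) (Z : Set V)
    [DecidablePred (· ∈ Z)] (hmZ : ∀ x ∈ Z, m x ∈ Z) (hfZ : ∀ x ∈ Z, f x ∈ Z) :
    IsTiling (Z.piecewise m f) := by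
  refine ⟨fun x => ?_, fun x => ?_⟩ <;> by_cases hx : x ∈ Z
  · simpa [hx] using hm.1 x
  · simpa [hx] using hf.1 x
  · rw [Set.piecewise_eq_of_mem _ _ _ hx, Set.piecewise_eq_of_mem _ _ _ (hmZ x hx), hm.2]
  · have hfx : f x ∉ Z := fun h => hx (hf.2 x ▸ hfZ _ h)
    rw [Set.piecewise_eq_of_notMem _ _ _ hx, Set.piecewise_eq_of_notMem _ _ _ hfx, hf.2]

section Rigidity

variable {τ τ' : Omega} {D : Finset V}

lemma partner_mem_of_mem_iff_ne (hD : ∀ x, x ∈ D ↔ τ.1 x ≠ τ'.1 x) {x : V} (hx : x ∈ D) :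
    τ.1 x ∈ D := by
  rw [hD] at hx ⊢
  intro h
  apply hx
  calc τ.1 x = τ'.1 (τ'.1 (τ.1 x)) := (τ'.2.2 _).symm
    _ = τ'.1 x := by rw [← h, τ.2.2]

lemma sum_isEven_partner (τ : Omega) (hτD : ∀ x ∈ D, τ.1 x ∈ D) (G : V → ℤ) :
    ∑ x ∈ D with IsEven x, G (τ.1 x) = ∑ x ∈ D with ¬ IsEven x, G x := by
  have hpar := fun x => isEven_of_adj (τ.2.1 x)
  refine Finset.sum_nbij' τ.1 τ.1 (fun x hx => ?_) (fun x hx => ?_) (fun x _ => τ.2.2 x)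
    (fun x _ => τ.2.2 x) (fun _ _ => rfl)
  all_goals
    simp only [Finset.mem_filter] at hx ⊢
    refine ⟨hτD x hx.1, ?_⟩
  · simpa [hpar] using hx.2
  · rw [← τ.2.2 x, hpar] at hx
    simpa using hx.2

lemma sum_isEven_partner_eq (hD : ∀ x, x ∈ D ↔ τ.1 x ≠ τ'.1 x) (G : V → ℤ) :
    ∑ x ∈ D with IsEven x, G (τ.1 x) = ∑ x ∈ D with IsEven x, G (τ'.1 x) := by
  have hD' : ∀ x, x ∈ D ↔ τ'.1 x ≠ τ.1 x := fun x => (hD x).trans ne_comm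
  rw [sum_isEven_partner τ (fun x => partner_mem_of_mem_iff_ne hD) G,
    sum_isEven_partner τ' (fun x => partner_mem_of_mem_iff_ne hD') G]

lemma potential_le_of_adj {x y s : V} (h : Adj x y) (hs : s = unitVec 2 ∨ s = -unitVec 2) :
    y 0 + s 2 * y 2 ≤ x 0 + s 2 * x 2 + 1 := by
  obtain ⟨i, rfl | rfl⟩ := h <;> rcases hs with rfl | rfl <;> fin_cases i <;>
    simp [unitVec] <;> omega

lemma eq_of_potential_eq_of_adj {x y s : V} (h : Adj x y) (hs : s = unitVec 2 ∨ s = -unitVec 2)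
    (heq : y 0 + s 2 * y 2 = x 0 + s 2 * x 2 + 1) : y = x + unitVec 0 ∨ y = x + s := by
  obtain ⟨i, rfl | rfl⟩ := h <;> rcases hs with rfl | rfl <;> fin_cases i <;>
    simp [unitVec, funext_iff, Fin.forall_fin_succ] at heq ⊢ <;> omega

lemma partner_eq_of_layered_on_diff (hD : ∀ x, x ∈ D ↔ τ.1 x ≠ τ'.1 x) {s : V}
    (hs : s = unitVec 2 ∨ s = -unitVec 2) {d : ℤ → V}
    (hd : ∀ x ∈ D, d (x 1) = unitVec 0 ∨ d (x 1) = s)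
    (hτ : ∀ x ∈ D, IsEven x → τ.1 x = x + d (x 1)) :
    ∀ x ∈ D, IsEven x → τ'.1 x = x + (unitVec 0 + s - d (x 1)) := by
  set F : V → ℤ := fun y => y 0 + s 2 * y 2
  have hs2 : s 0 = 0 ∧ s 2 * s 2 = 1 := by rcases hs with rfl | rfl <;> simp [unitVec]
  have hτF : ∀ x ∈ D, IsEven x → F (τ.1 x) = F x + 1 := fun x hx he => by
    rcases hd x hx with h | h <;> simp [F, hτ x hx he, h, unitVec] <;> nlinarith
  have hle : ∀ x ∈ D.filter IsEven, F (τ'.1 x) ≤ F (τ.1 x) := fun x hx => by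
    rw [Finset.mem_filter] at hx
    rw [hτF x hx.1 hx.2]
    exact potential_le_of_adj (τ'.2.1 x) hs
  have htight := (Finset.sum_eq_sum_iff_of_le hle).1 (sum_isEven_partner_eq hD F).symm
  intro x hx he
  have hτ'x := eq_of_potential_eq_of_adj (τ'.2.1 x) hs
    ((htight x (Finset.mem_filter.2 ⟨hx, he⟩)).trans (hτF x hx he))
  have hne : τ'.1 x ≠ x + d (x 1) := hτ x hx he ▸ ((hD x).1 hx).symm
  rcases hd x hx with hdx | hdx <;> rw [hdx] at hne ⊢
  · rw [hτ'x.resolve_left hne]; abel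
  · rw [hτ'x.resolve_right hne]; abel

theorem eq_of_layered_on_diff (hD : ∀ x, x ∈ D ↔ τ.1 x ≠ τ'.1 x) {s : V}
    (hs : s = unitVec 2 ∨ s = -unitVec 2) {d : ℤ → V}
    (hd : ∀ x ∈ D, d (x 1) = unitVec 0 ∨ d (x 1) = s)
    (hτ : ∀ x ∈ D, IsEven x → τ.1 x = x + d (x 1)) : τ = τ' := by
  have hτ' := partner_eq_of_layered_on_diff hD hs hd hτ
  set G : V → ℤ := fun y => (if d (y 1) = unitVec 0 then 1 else -1) * y 0
  have hs01 : s 0 = 0 ∧ s 1 = 0 := by rcases hs with rfl | rfl <;> simp [unitVec]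
  have hG : ∀ x ∈ D.filter IsEven, G (τ.1 x) = G (τ'.1 x) + 1 := fun x hx => by
    rw [Finset.mem_filter] at hx
    rw [hτ x hx.1 hx.2, hτ' x hx.1 hx.2]
    rcases hd x hx.1 with h | h
    · simp [G, h, hs01, unitVec]
    · have : s ≠ unitVec 0 := fun h0 => by simp [h0, unitVec] at hs01
      simp [G, h, hs01, this, unitVec]
  have hempty : D.filter IsEven = ∅ := by
    have := sum_isEven_partner_eq hD G
    rw [Finset.sum_congr rfl hG, Finset.sum_add_distrib] at this
    simpa using this
  refine Subtype.ext (funext fun x => by_contra fun hne => ?_)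
  have hx := (hD x).2 hne
  by_cases he : IsEven x
  · exact Finset.notMem_empty x (hempty ▸ Finset.mem_filter.2 ⟨hx, he⟩)
  · exact Finset.notMem_empty _
      (hempty ▸ Finset.mem_filter.2
        ⟨partner_mem_of_mem_iff_ne hD hx, (isEven_of_adj (τ.2.1 x)).2 he⟩)

end Rigidity

section Slab

variable (n : ℕ)

def slabDir (c : ZMod (2 * n)) (t : ℤ) : V :=
  if (t : ZMod (2 * n)) = c then unitVec 2
  else if (t : ZMod (2 * n)) = c + n then -unitVec 2 else unitVec 0

lemma slabDir_apply_one (c : ZMod (2 * n)) (t : ℤ) : slabDir n c t 1 = 0 := by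
  unfold slabDir; split_ifs <;> simp [unitVec]

lemma exists_slabDir_eq_unitVec (c : ZMod (2 * n)) (t : ℤ) :
    ∃ j, slabDir n c t = unitVec j ∨ slabDir n c t = -unitVec j := by
  unfold slabDir; split_ifs
  exacts [⟨2, Or.inl rfl⟩, ⟨2, Or.inr rfl⟩, ⟨0, Or.inl rfl⟩]

def slabTiling (c : ZMod (2 * n)) : Omega :=
  ⟨layeredMap 1 (slabDir n c),
    isTiling_layeredMap (slabDir_apply_one n c) (exists_slabDir_eq_unitVec n c)⟩

lemma translate_slabTiling {v : V} (hv : IsEven v) (c : ZMod (2 * n)) :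
    translate v (slabTiling n c) = slabTiling n (c + v 1) := by
  refine Subtype.ext (funext fun x => ?_)
  simp only [translate, slabTiling, translate_layeredMap hv]
  congr 1
  funext t
  simp only [slabDir, Int.cast_sub, sub_eq_iff_eq_add, add_right_comm c]

lemma mem_kbox {k : ℕ} {x₀ y : V} : y ∈ kbox k x₀ ↔ ∀ i, x₀ i ≤ y i ∧ y i ≤ x₀ i + k - 1 := by
  simp [kbox, Fintype.mem_piFinset]

variable {n}

lemma not_up_down_of_mem_kbox {k : ℕ} (hk : k ≤ n) {c : ZMod (2 * n)} {x₀ x y : V}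
    (hx : x ∈ kbox k x₀) (hy : y ∈ kbox k x₀) (hcx : (x 1 : ZMod (2 * n)) = c)
    (hcy : (y 1 : ZMod (2 * n)) = c + n) : False := by
  have hcast : ((x 1 + n : ℤ) : ZMod (2 * n)) = (y 1 : ZMod (2 * n)) := by
    push_cast; rw [hcx, hcy]
  obtain ⟨q, hq⟩ := (ZMod.intCast_eq_intCast_iff_dvd_sub _ _ _).1 hcast
  have hx1 := (mem_kbox.1 hx 1)
  have hy1 := (mem_kbox.1 hy 1)
  push_cast at hq
  obtain hq0 | rfl | hq0 := lt_trichotomy q 0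
  · have : q ≤ -1 := by omega
    nlinarith
  · omega
  · have : 1 ≤ q := by omega
    nlinarith

lemma exists_slabDir_mem_of_kbox {k : ℕ} (hk : k ≤ n) (c : ZMod (2 * n)) (x₀ : V) :
    ∃ s : V, (s = unitVec 2 ∨ s = -unitVec 2) ∧
      ∀ x ∈ kbox k x₀, slabDir n c (x 1) = unitVec 0 ∨ slabDir n c (x 1) = s := by
  by_cases hdown : ∃ y ∈ kbox k x₀, (y 1 : ZMod (2 * n)) = c + n
  · obtain ⟨y, hy, hcy⟩ := hdown
    refine ⟨-unitVec 2, Or.inr rfl, fun x hx => ?_⟩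
    have hup : (x 1 : ZMod (2 * n)) ≠ c := fun hcx => not_up_down_of_mem_kbox hk hx hy hcx hcy
    unfold slabDir; split_ifs <;> simp_all
  · simp only [not_exists, not_and] at hdown
    refine ⟨unitVec 2, Or.inl rfl, fun x hx => ?_⟩
    unfold slabDir; split_ifs <;> simp_all

theorem eq_of_eqOn_kbox_slabTiling {k : ℕ} (hk : k ≤ n) {c : ZMod (2 * n)} {x₀ : V}
    {τ τ' : Omega} (hdiff : ∀ x, τ.1 x ≠ τ'.1 x → x ∈ kbox k x₀)
    (hagree : ∀ x ∈ kbox k x₀, τ.1 x = (slabTiling n c).1 x) : τ = τ' := by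
  classical
  obtain ⟨s, hs, hsd⟩ := exists_slabDir_mem_of_kbox hk c x₀
  refine eq_of_layered_on_diff (D := (kbox k x₀).filter fun x => τ.1 x ≠ τ'.1 x) (d := slabDir n c)
    (fun x => ?_) hs (fun x hx => hsd x (Finset.mem_filter.1 hx).1) (fun x hx he => ?_)
  · simpa using fun h => hdiff x h
  · simp [hagree x (Finset.mem_filter.1 hx).1, slabTiling, layeredMap, he]

end Slab

section Measure

lemma measurable_translate (v : V) : Measurable (translate v) := by
  refine Measurable.subtype_mk (measurable_pi_lambda _ fun x => ?_)
  exact (Measurable.of_discrete (f := fun y : V => y + v)).comp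
    ((measurable_pi_apply (x - v)).comp measurable_subtype_coe)

variable (n : ℕ)

noncomputable def slabMeasure : Measure Omega :=
  ((2 * n : ℕ) : ℝ≥0∞)⁻¹ • Measure.sum fun c : ZMod (2 * n) => Measure.dirac (slabTiling n c)

lemma invariant_slabMeasure : Invariant (slabMeasure n) := by
  intro v hv
  rw [slabMeasure, Measure.map_smul, Measure.map_sum (measurable_translate v).aemeasurable]
  simp only [Measure.map_dirac' (measurable_translate v), translate_slabTiling n hv]
  exact congrArg _ (Measure.sum_comp_equiv (Equiv.addRight (v 1 : ZMod (2 * n)))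
    fun c => Measure.dirac (slabTiling n c))

variable [NeZero n]

instance : IsProbabilityMeasure (slabMeasure n) := by
  constructor
  simp only [slabMeasure, Measure.smul_apply, Measure.sum_fintype, Measure.coe_finsetSum,
    Finset.sum_apply, measure_univ, Finset.sum_const, Finset.card_univ, ZMod.card, nsmul_eq_mul,
    mul_one, smul_eq_mul]
  exact ENNReal.inv_mul_cancel (by simp [NeZero.ne n]) (by simp [ENNReal.mul_eq_top])

lemma slabMeasure_eq_zero_iff {A : Set Omega} :
    slabMeasure n A = 0 ↔ ∀ c, slabTiling n c ∉ A := by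
  simp [slabMeasure, ENNReal.mul_eq_top]

end Measure

theorem isKGibbs_slabMeasure (n : ℕ) [NeZero n] {k : ℕ} (hk : k ≤ n) :
    IsKGibbs k (slabMeasure n) := by
  refine ⟨invariant_slabMeasure n, fun x₀ τ τ' hdiff => ?_⟩
  by_cases h : τ = τ'
  · rw [h]
  have hrigid : ∀ {σ σ' : Omega}, (∀ x, σ.1 x ≠ σ'.1 x → x ∈ kbox k x₀) → σ ≠ σ' →
      ∀ c, slabTiling n c ∉ {ρ : Omega | ∀ x ∈ kbox k x₀, ρ.1 x = σ.1 x} :=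
    fun hd hne c hc => hne (eq_of_eqOn_kbox_slabTiling hk hd fun x hx => (hc x hx).symm)
  rw [(slabMeasure_eq_zero_iff n).2 (hrigid (fun x hx => (hdiff x hx).1) h),
    (slabMeasure_eq_zero_iff n).2 (hrigid (fun x hx => (hdiff x (Ne.symm hx)).1) (Ne.symm h))]

section Cycle

variable (n : ℕ)

def profileDir (u : V) (t : ℤ) : V :=
  if t = 0 then u else if t = n then -u else unitVec 0

/-- The slab construction transposed to the layers `x₂ = t`, with `e₂` in the role of `e₃`;
only its restriction to the cycle `OnCycle n` is used. -/
def cycleTiling : Omega :=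
  ⟨layeredMap 2 (profileDir n (unitVec 1)), isTiling_layeredMap
    (fun t => by unfold profileDir; split_ifs <;> simp [unitVec])
    (fun t => by unfold profileDir; split_ifs
                 exacts [⟨1, Or.inl rfl⟩, ⟨1, Or.inr rfl⟩, ⟨0, Or.inl rfl⟩])⟩

/-- An alternating cycle of `σ_0`, made of staircases on the four faces `x₂ = 0`, `x₂ = n`,
`x₁ = 0`, `x₁ = n` of the tube over `[0, n]²`. On each face both `σ_0` and `cycleTiling` match the
two diagonals of the staircase with each other, in the two different ways; at the edges of the tube
`σ_0` passes to the next face. -/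
def OnCycle (x : V) : Prop :=
  (x 2 = 0 ∧ -n < x 0 ∧ x 0 ≤ 0 ∧ (x 0 + x 1 = 0 ∨ x 0 + x 1 = 1)) ∨
  (x 2 = n ∧ -n < x 0 ∧ x 0 ≤ 0 ∧ (x 1 - x 0 = n - 1 ∨ x 1 - x 0 = n)) ∨
  (x 1 = 0 ∧ 0 < x 2 ∧ x 2 < n ∧ (x 0 + x 2 = 0 ∨ x 0 + x 2 = 1)) ∨
  (x 1 = n ∧ 0 < x 2 ∧ x 2 < n ∧ (x 2 - x 0 = n ∨ x 2 - x 0 = n - 1))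

variable {n}

lemma slabDir_zero_eq_profileDir {t : ℤ} (ht0 : 0 ≤ t) (htn : t ≤ n) :
    slabDir n 0 t = profileDir n (unitVec 2) t := by
  have hcast : ∀ s : ℤ, 0 ≤ s → s ≤ n → ((t : ZMod (2 * n)) = s ↔ t = s) := fun s hs hsn => by
    refine ⟨fun h => ?_, fun h => h ▸ rfl⟩
    obtain ⟨q, hq⟩ := (ZMod.intCast_eq_intCast_iff_dvd_sub _ _ _).1 h
    push_cast at hq
    obtain hq0 | rfl | hq0 := lt_trichotomy q 0 <;> nlinarith
  have hn : (0 + n : ZMod (2 * n)) = ((n : ℤ) : ZMod (2 * n)) := by simp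
  have hz := hcast 0 le_rfl (by omega)
  rw [Int.cast_zero] at hz
  simp only [slabDir, profileDir, hn, hz, hcast n (by omega) le_rfl]

lemma onCycle_cycleTiling {x : V} (hx : OnCycle n x) : OnCycle n ((cycleTiling n).1 x) := by
  unfold OnCycle at *
  simp only [cycleTiling, layeredMap_apply, profileDir]
  rcases hx with ⟨_, _, _, _ | _⟩ | ⟨_, _, _, _ | _⟩ | ⟨_, _, _, _ | _⟩ | ⟨_, _, _, _ | _⟩
  all_goals split_ifs <;> simp [unitVec] <;> omega

lemma onCycle_slabTiling {x : V} (hx : OnCycle n x) : OnCycle n ((slabTiling n 0).1 x) := by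
  have h1 : 0 ≤ x 1 ∧ x 1 ≤ n := by unfold OnCycle at hx; omega
  unfold OnCycle at *
  simp only [slabTiling, layeredMap_apply, slabDir_zero_eq_profileDir h1.1 h1.2, profileDir]
  rcases hx with ⟨_, _, _, _ | _⟩ | ⟨_, _, _, _ | _⟩ | ⟨_, _, _, _ | _⟩ | ⟨_, _, _, _ | _⟩
  all_goals split_ifs <;> simp [unitVec] <;> omega

lemma onCycle_mem_cube {x : V} (hx : OnCycle n x) : x ∈ cube n := by
  simp only [cube, Fintype.mem_piFinset, Finset.mem_Icc]
  unfold OnCycle at hx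
  intro i; fin_cases i <;> simp <;> omega

lemma onCycle_zero [NeZero n] : OnCycle n 0 := Or.inl (by simp [NeZero.pos n])

variable (n) in
open Classical in
noncomputable def flipTiling : Omega :=
  ⟨{x | OnCycle n x}.piecewise (cycleTiling n).1 (slabTiling n 0).1,
    isTiling_piecewise (cycleTiling n).2 (slabTiling n 0).2 _
      (fun _ => onCycle_cycleTiling) (fun _ => onCycle_slabTiling)⟩

lemma flipTiling_apply_of_onCycle {x : V} (hx : OnCycle n x) :
    (flipTiling n).1 x = (cycleTiling n).1 x :=
  if_pos hx

lemma flipTiling_apply_of_not_onCycle {x : V} (hx : ¬ OnCycle n x) :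
    (flipTiling n).1 x = (slabTiling n 0).1 x :=
  if_neg hx

end Cycle

theorem not_isGibbs_slabMeasure (n : ℕ) [NeZero n] : ¬ IsGibbs (slabMeasure n) := by
  rintro ⟨-, hG⟩
  have hdiff : ∀ x, (slabTiling n 0).1 x ≠ (flipTiling n).1 x →
      x ∈ cube n ∧ (slabTiling n 0).1 x ∈ cube n ∧ (flipTiling n).1 x ∈ cube n := by
    intro x hne
    have hx : OnCycle n x := by
      by_contra hx
      exact hne (flipTiling_apply_of_not_onCycle hx).symm
    rw [flipTiling_apply_of_onCycle hx]
    exact ⟨onCycle_mem_cube hx, onCycle_mem_cube (onCycle_slabTiling hx),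
      onCycle_mem_cube (onCycle_cycleTiling hx)⟩
  have hflip : (flipTiling n).1 0 = unitVec 1 := by
    rw [flipTiling_apply_of_onCycle onCycle_zero]
    simp [cycleTiling, layeredMap, profileDir, IsEven]
  have hzero : slabMeasure n {σ | ∀ x ∈ cube n, σ.1 x = (flipTiling n).1 x} = 0 := by
    refine (slabMeasure_eq_zero_iff n).2 fun c hc => ?_
    have := congrFun ((hc 0 (onCycle_mem_cube onCycle_zero)).trans hflip) 1
    simp [slabTiling, layeredMap_apply, slabDir_apply_one, unitVec] at this
  exact (slabMeasure_eq_zero_iff n).1 ((hG _ _ _ hdiff).trans hzero) 0 fun x _ => rfl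

theorem statement19_general (k : ℕ) :
    ∃ μ : Measure Omega, IsProbabilityMeasure μ ∧ IsKGibbs k μ ∧ ¬ IsGibbs μ :=
  ⟨slabMeasure (k + 1), inferInstance, isKGibbs_slabMeasure (k + 1) k.le_succ,
    not_isGibbs_slabMeasure (k + 1)⟩

/-- **`k`-Gibbs measures need not be Gibbs.** For every `k ≥ 2` there is an invariant Borel
probability measure on tilings that is `k`-Gibbs but not Gibbs. -/
theorem statement19 (k : ℕ) (hk : 2 ≤ k) :
    ∃ μ : Measure Omega, IsProbabilityMeasure μ ∧ IsKGibbs k μ ∧ ¬ IsGibbs μ :=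
  statement19_general k

end Dimers
end
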